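/- arXiv:2307.15013 — 2 statements merged into one kernel-verified Lean document; each statement's English description precedes it below -/
import Mathlib

section
/- Let G be a locally compact, second countable Hausdorff group acting continuously on a locally compact Hausdorff space X, let K ⊆ G be a compact identity neighbourhood and let S be a K-slice. Let L ⊆ G be a connected open subset and x ∈ X. If L·x ⊆ (K·S)°, then there exists s ∈ S such that L·x ⊆ K·s. -/
/-!
Since `K` and `S` are compact and `X` is Hausdorff, the action map `K × S → X` is a closed
embedding, so every point `g • x` with `g ∈ L` has coordinates `(κ g, σ g) ∈ K × S` depending
continuously on `g`. For `g'` close to `g` the element `u = (κ g')⁻¹ g' g⁻¹ κ g` lies in `K` and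
satisfies `u • σ g = 1 • σ g'`, so injectivity of the action on `K × S` forces `σ g' = σ g`.
Thus `σ` is locally constant, hence constant on the connected set `L`.
-/

open scoped Pointwise

/-- `S` is a `K`-slice for the action of `G` on `X`: `S` is compact and the action map
`K × S → X, (g, x) ↦ g • x` is injective. -/
def IsSlice {G X : Type*} [Group G] [TopologicalSpace G] [TopologicalSpace X]
    [MulAction G X] (K : Set G) (S : Set X) : Prop :=
  IsCompact S ∧ Set.InjOn (fun p : G × X => p.1 • p.2) (K ×ˢ S)

open scoped Topology
open Set

namespace IsSlice

variable {G X : Type*} [Group G] [TopologicalSpace G] [TopologicalSpace X] [MulAction G X]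
  {K : Set G} {S : Set X}

theorem eq_of_smul_eq (hS : IsSlice K S) (h1 : (1 : G) ∈ K) {k : G} (hk : k ∈ K) {s s' : X}
    (hs : s ∈ S) (hs' : s' ∈ S) (h : k • s = s') : s = s' :=
  (Prod.ext_iff.mp (hS.2 (mk_mem_prod hk hs) (mk_mem_prod h1 hs') (by simpa using h))).2

theorem isClosedEmbedding_smul [ContinuousSMul G X] [T2Space X] (hS : IsSlice K S)
    (hK : IsCompact K) : Topology.IsClosedEmbedding (fun p : K ×ˢ S => p.1.1 • p.1.2) := by
  have : CompactSpace (K ×ˢ S) := isCompact_iff_compactSpace.mp (hK.prod hS.1)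
  exact (continuous_subtype_val.fst.smul continuous_subtype_val.snd).isClosedEmbedding
    fun a b h => Subtype.ext (hS.2 a.2 b.2 h)

theorem exists_continuous_coords [ContinuousSMul G X] [T2Space X] (hS : IsSlice K S)
    (hK : IsCompact K) {Y : Type*} [TopologicalSpace Y] {f : Y → X} (hf : Continuous f)
    (hfKS : ∀ y, f y ∈ K • S) :
    ∃ p : Y → G × X, Continuous p ∧ (∀ y, p y ∈ K ×ˢ S) ∧ ∀ y, (p y).1 • (p y).2 = f y := by
  have hlift : ∀ y, ∃ q : K ×ˢ S, q.1.1 • q.1.2 = f y := fun y => by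
    obtain ⟨k, hk, s, hs, hks⟩ := mem_smul.mp (hfKS y)
    exact ⟨⟨(k, s), mk_mem_prod hk hs⟩, hks⟩
  choose q hq using hlift
  have hqc : Continuous q :=
    (hS.isClosedEmbedding_smul hK).isInducing.continuous_iff.mpr
      (by simpa only [Function.comp_def, hq] using hf)
  exact ⟨fun y => (q y).1, continuous_subtype_val.comp hqc, fun y => (q y).2, hq⟩

theorem isLocallyConstant_of_smul_eq [IsTopologicalGroup G]
    (hS : IsSlice K S) (hK : K ∈ 𝓝 1) {Y : Type*} [TopologicalSpace Y] {f κ : Y → G}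
    {σ : Y → X} (hf : Continuous f) (hκ : Continuous κ)
    (hσS : ∀ y, σ y ∈ S) {x : X} (h : ∀ y, κ y • σ y = f y • x) : IsLocallyConstant σ := by
  have hσ : ∀ y, σ y = ((κ y)⁻¹ * f y) • x := fun y => by
    rw [mul_smul, ← h y, inv_smul_smul]
  refine (IsLocallyConstant.iff_eventually_eq σ).mpr fun y => ?_
  set u : Y → G := fun y' => (κ y')⁻¹ * f y' * ((κ y)⁻¹ * f y)⁻¹
  have hu1 : u y = 1 := mul_inv_cancel _
  have hu : Continuous u := (hκ.inv.mul hf).mul continuous_const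
  have huK : ∀ᶠ y' in 𝓝 y, u y' ∈ K := hu.continuousAt.preimage_mem_nhds (by rwa [hu1])
  filter_upwards [huK] with y' hy'
  have hmove : u y' • σ y = σ y' := by
    rw [hσ y, hσ y', smul_smul, inv_mul_cancel_right]
  exact (hS.eq_of_smul_eq (mem_of_mem_nhds hK) hy' (hσS y) (hσS y') hmove).symm

end IsSlice

theorem stmt_18_general {G : Type*} [Group G] [TopologicalSpace G] [IsTopologicalGroup G]
    {X : Type*} [TopologicalSpace X] [T2Space X]
    [MulAction G X] [ContinuousSMul G X]
    (K : Set G) (hKc : IsCompact K) (hKn : K ∈ nhds (1 : G))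
    (S : Set X) (hS : IsSlice K S)
    (L : Set G) (hLconn : IsConnected L)
    (x : X) (hLx : ∀ g ∈ L, g • x ∈ interior (K • S)) :
    ∃ s ∈ S, ∀ g ∈ L, ∃ k ∈ K, g • x = k • s := by
  have : PreconnectedSpace L := isPreconnected_iff_preconnectedSpace.mp hLconn.isPreconnected
  obtain ⟨p, hpc, hpKS, hp⟩ := hS.exists_continuous_coords hKc
    (f := fun g : L => (g : G) • x) (by fun_prop) fun g => interior_subset (hLx g g.2)
  have hσ : IsLocallyConstant fun g => (p g).2 :=
    hS.isLocallyConstant_of_smul_eq hKn continuous_subtype_val (continuous_fst.comp hpc)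
      (fun g => (hpKS g).2) hp
  obtain ⟨g₀, hg₀⟩ := hLconn.nonempty
  refine ⟨(p ⟨g₀, hg₀⟩).2, (hpKS _).2, fun g hg => ⟨(p ⟨g, hg⟩).1, (hpKS _).1, ?_⟩⟩
  rw [← hσ.apply_eq_of_preconnectedSpace ⟨g, hg⟩ ⟨g₀, hg₀⟩, hp]

/-- **Concentration in slices.** Let `G` be a locally compact, second countable Hausdorff
group acting continuously on a locally compact Hausdorff space `X`, let `K` be a compact
identity neighbourhood, `S` a `K`-slice, `L ⊆ G` a connected open subset and `x ∈ X`.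
If `L·x ⊆ (K·S)°` then there is `s ∈ S` with `L·x ⊆ K·s`. -/
theorem stmt_18 {G : Type*} [Group G] [TopologicalSpace G] [IsTopologicalGroup G]
    [LocallyCompactSpace G] [T2Space G] [SecondCountableTopology G]
    {X : Type*} [TopologicalSpace X] [LocallyCompactSpace X] [T2Space X]
    [MulAction G X] [ContinuousSMul G X]
    (K : Set G) (hKc : IsCompact K) (hKn : K ∈ nhds (1 : G))
    (S : Set X) (hS : IsSlice K S)
    (L : Set G) (hLconn : IsConnected L) (hLopen : IsOpen L)
    (x : X) (hLx : ∀ g ∈ L, g • x ∈ interior (K • S)) :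
    ∃ s ∈ S, ∀ g ∈ L, ∃ k ∈ K, g • x = k • s :=
  stmt_18_general K hKc hKn S hS L hLconn x hLx
end

section
/- Let G be a locally compact, second countable Hausdorff group and let Λ ⊆ G be an FLC Delone set. Then the discrete hull Ω₀(Λ) = {P ∈ Ω(Λ) : e ∈ P} is totally disconnected (in the Chabauty–Fell topology). -/
open scoped Pointwise

/-- The Chabauty space of a topological group `G`: the set of all closed subsets of `G`. -/
def ChabautySpace (G : Type*) [TopologicalSpace G] := {A : Set G // IsClosed A}

/-- The Chabauty–Fell topology, generated by the subbasis consisting of the sets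
`𝒪_K = {A : A ∩ K = ∅}` for `K` compact and `𝒪^U = {A : A ∩ U ≠ ∅}` for `U` open. -/
instance (G : Type*) [TopologicalSpace G] : TopologicalSpace (ChabautySpace G) :=
  TopologicalSpace.generateFrom
    ({s | ∃ K : Set G, IsCompact K ∧ s = {A : ChabautySpace G | A.1 ∩ K = ∅}} ∪
      {s | ∃ U : Set G, IsOpen U ∧ s = {A : ChabautySpace G | (A.1 ∩ U).Nonempty}})

/-- The hull of a closed subset `Λ ⊆ G`: the closure in the Chabauty space of the set of
left translates of `Λ`. -/
def hull {G : Type*} [Group G] [TopologicalSpace G] (Λ : Set G) :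
    Set (ChabautySpace G) :=
  closure {C : ChabautySpace G | ∃ g : G, C.1 = g • Λ}

/-!
Fix a compact set `C ⊆ G`. Meeting `C` is a closed condition in the Chabauty–Fell topology,
and it is an open condition on a family of finite local complexity: choose a compact `L` with
`C ⊆ interior L`; there are only finitely many patterns `Q ∩ L` in the family, so removing from
`interior L` those patterns that miss `C` leaves an open set `V`, and a member of the family
meets `C` iff it meets `V`. Hence `{Q : Q ∩ C ≠ ∅}` is clopen in the discrete hull, and these
clopen sets separate its points, because two distinct closed sets differ at some `g`, which has a
compact neighbourhood missing one of them.
-/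

namespace ChabautySpace

variable {G : Type*} [TopologicalSpace G]

theorem isOpen_setOf_inter_eq_empty {K : Set G} (hK : IsCompact K) :
    IsOpen {A : ChabautySpace G | A.1 ∩ K = ∅} :=
  TopologicalSpace.GenerateOpen.basic _ (Or.inl ⟨K, hK, rfl⟩)

theorem isOpen_setOf_inter_nonempty {U : Set G} (hU : IsOpen U) :
    IsOpen {A : ChabautySpace G | (A.1 ∩ U).Nonempty} :=
  TopologicalSpace.GenerateOpen.basic _ (Or.inr ⟨U, hU, rfl⟩)

def HasFiniteLocalComplexity (S : Set (ChabautySpace G)) : Prop :=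
  ∀ K : Set G, IsCompact K → ((fun P : ChabautySpace G => P.1 ∩ K) '' S).Finite

namespace HasFiniteLocalComplexity

variable [LocallyCompactSpace G] {S : Set (ChabautySpace G)}

theorem exists_isOpen_forall_inter_nonempty_iff (hS : HasFiniteLocalComplexity S) {C : Set G}
    (hC : IsCompact C) :
    ∃ V : Set G, IsOpen V ∧ ∀ Q ∈ S, (Q.1 ∩ C).Nonempty ↔ (Q.1 ∩ V).Nonempty := by
  obtain ⟨L, hL, hCL, -⟩ := exists_compact_between hC isOpen_univ (Set.subset_univ C)
  set missing : Set (Set G) := {p ∈ (fun P : ChabautySpace G => P.1 ∩ L) '' S | p ∩ C = ∅}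
  refine ⟨⋂ p ∈ missing, interior L \ p, ?_, fun Q hQ => ⟨?_, ?_⟩⟩
  · refine ((hS L hL).subset (Set.sep_subset _ _)).isOpen_biInter ?_
    rintro _ ⟨⟨P, -, rfl⟩, -⟩
    rw [Set.sdiff_inter, Set.sdiff_eq_empty.2 interior_subset, Set.union_empty]
    exact isOpen_interior.sdiff P.2
  · rintro ⟨q, hqQ, hqC⟩
    refine ⟨q, hqQ, Set.mem_iInter₂.2 fun p hp => ⟨hCL hqC, fun hqp => ?_⟩⟩
    exact (Set.eq_empty_iff_forall_notMem.1 hp.2) q ⟨hqp, hqC⟩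
  · rintro ⟨q, hqQ, hqV⟩
    by_contra hQC
    have hmissing : Q.1 ∩ L ∈ missing :=
      ⟨⟨Q, hQ, rfl⟩, by
        rw [Set.inter_right_comm, Set.not_nonempty_iff_eq_empty.1 hQC, Set.empty_inter]⟩
    obtain ⟨hqL, hqQL⟩ := Set.mem_iInter₂.1 hqV _ hmissing
    exact hqQL ⟨hqQ, interior_subset hqL⟩

theorem isClopen_setOf_inter_nonempty (hS : HasFiniteLocalComplexity S) {C : Set G}
    (hC : IsCompact C) : IsClopen {Q : S | (Q.1.1 ∩ C).Nonempty} := by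
  obtain ⟨V, hV, hCV⟩ := hS.exists_isOpen_forall_inter_nonempty_iff hC
  constructor
  · rw [← isOpen_compl_iff]
    convert (isOpen_setOf_inter_eq_empty hC).preimage continuous_subtype_val using 1
    ext Q
    simp [Set.not_nonempty_iff_eq_empty]
  · convert (isOpen_setOf_inter_nonempty hV).preimage continuous_subtype_val using 1
    ext Q
    exact hCV Q.1 Q.2

theorem exists_isClopen_mem_notMem (hS : HasFiniteLocalComplexity S) {x y : S} {g : G}
    (hgx : g ∈ x.1.1) (hgy : g ∉ y.1.1) : ∃ U : Set S, IsClopen U ∧ x ∈ U ∧ y ∉ U := by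
  obtain ⟨C, hC, hgC, hCy⟩ := exists_compact_subset y.1.2.isOpen_compl hgy
  refine ⟨_, hS.isClopen_setOf_inter_nonempty hC, ⟨g, hgx, interior_subset hgC⟩, ?_⟩
  rintro ⟨z, hzy, hzC⟩
  exact hCy hzC hzy

theorem totallySeparatedSpace (hS : HasFiniteLocalComplexity S) : TotallySeparatedSpace S := by
  refine totallySeparatedSpace_iff_exists_isClopen.2 fun x y hxy => ?_
  have hne : x.1.1 ≠ y.1.1 := fun h => hxy (Subtype.ext (Subtype.ext h))
  by_cases hsub : x.1.1 ⊆ y.1.1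
  · obtain ⟨g, hgy, hgx⟩ := Set.not_subset.1 fun h => hne (hsub.antisymm h)
    obtain ⟨U, hU, hyU, hxU⟩ := hS.exists_isClopen_mem_notMem hgy hgx
    exact ⟨Uᶜ, hU.compl, hxU, by simpa using hyU⟩
  · obtain ⟨g, hgx, hgy⟩ := Set.not_subset.1 hsub
    exact hS.exists_isClopen_mem_notMem hgx hgy

end HasFiniteLocalComplexity

end ChabautySpace

theorem stmt_19_general {G : Type*} [Group G] [TopologicalSpace G]
    [LocallyCompactSpace G]
    (Λ : Set G)
    (hFLC : ∀ K : Set G, IsCompact K →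
      {s : Set G | ∃ P ∈ {P ∈ hull Λ | (1 : G) ∈ P.1}, s = P.1 ∩ K}.Finite) :
    IsTotallyDisconnected {P ∈ hull Λ | (1 : G) ∈ P.1} := by
  have hS : ChabautySpace.HasFiniteLocalComplexity {P ∈ hull Λ | (1 : G) ∈ P.1} := fun K hK => by
    simpa only [Set.image, eq_comm] using hFLC K hK
  have := hS.totallySeparatedSpace
  exact totallyDisconnectedSpace_subtype_iff.1 inferInstance

/-- **The discrete hull of an FLC Delone set is totally disconnected.**
Let `G` be a locally compact, second countable Hausdorff group and `Λ ⊆ G` a closed subset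
which is an FLC Delone set, i.e. (a) for every compact `K ⊆ G` the family
`{P ∩ K : P ∈ Ω₀(Λ)}` is finite, and (b) `∅ ∉ Ω(Λ)`.  Then the discrete hull
`Ω₀(Λ) = {P ∈ Ω(Λ) : e ∈ P}` is totally disconnected in the Chabauty–Fell topology. -/
theorem stmt_19 {G : Type*} [Group G] [TopologicalSpace G] [IsTopologicalGroup G]
    [LocallyCompactSpace G] [T2Space G] [SecondCountableTopology G]
    (Λ : Set G) (hΛ : IsClosed Λ)
    (hFLC : ∀ K : Set G, IsCompact K →
      {s : Set G | ∃ P ∈ {P ∈ hull Λ | (1 : G) ∈ P.1}, s = P.1 ∩ K}.Finite)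
    (hDelone : (⟨∅, isClosed_empty⟩ : ChabautySpace G) ∉ hull Λ) :
    IsTotallyDisconnected {P ∈ hull Λ | (1 : G) ∈ P.1} :=
  stmt_19_general Λ hFLC
end
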